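/- Let L be a solvable infinite filiform Lie algebra over a field of characteristic zero. Then [L, L] is abelian, i.e., L is metabelian. -/

import Mathlib

/-!
Write `V n` for the span of the `eᵢ` with `i ≥ n`; on `V 1`, `ad a` is the shift `eᵢ ↦ eᵢ₊₁`.

Solvability makes some `V M` abelian. Otherwise, for every `n` there is a least `s` with
`[eᵤ, eᵥ] ∈ V (u + v + 1 + s)` for all `u, v ≥ n`, attained by some pair `u, v`. If a derived
ideal contains an element with leading term at `eₙ`, shifting it by `ad a` to leading terms at
`eᵤ` and `eᵥ` and bracketing gives an element of the next derived ideal with leading term at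
`e_{u+v+1+s}`; so no derived ideal vanishes.

It remains to push abelianness down to `V 2 ⊇ [L, L]`. Suppose `V (n + 2)` is abelian, `n ≥ 1`,
and identify `V (n + 2)` with `K[X]` by `e_{n+2+k} ↦ X ^ k`, so that `ad a` is multiplication
by `X`. Then `ad e_{n+1}` commutes with `ad a` on `V (n + 2)`, so it is multiplication by the
polynomial `τ` of `[e_{n+1}, e_{n+2}]`, and `[ad a, ad eₙ] = ad e_{n+1}` forces
`ad eₙ = α - τ d/dX`. The Jacobi identity for `eₙ, e_{n+1}, e_{n+2}` becomes `τ τ' = 0`; in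
characteristic zero `τ` is then constant, and it has no constant term, so
`[e_{n+1}, e_{n+2}] = 0` and `V (n + 1)` is abelian.
-/

namespace Filiform

open LieAlgebra Polynomial

variable {K L : Type*} [Field K] [LieRing L] [LieAlgebra K L] (B : Module.Basis ℕ K L)

def tail (n : ℕ) : Submodule K L := Submodule.span K (B '' Set.Ici n)

variable {B}

theorem mem_tail_iff {x : L} {n : ℕ} : x ∈ tail B n ↔ ∀ j < n, B.repr x j = 0 := by
  simp only [tail, Module.Basis.mem_span_image, Set.subset_def, Finset.mem_coe,
    Finsupp.mem_support_iff, Set.mem_Ici]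
  exact ⟨fun h j hj => by_contra fun hne => absurd (h j hne) (by omega),
    fun h j hj => by_contra fun hlt => hj (h j (by omega))⟩

theorem repr_eq_zero_of_mem_tail {x : L} {n j : ℕ} (hx : x ∈ tail B n) (hj : j < n) :
    B.repr x j = 0 :=
  mem_tail_iff.1 hx j hj

theorem tail_antitone : Antitone (tail B) :=
  fun _ _ h => Submodule.span_mono (Set.image_mono (Set.Ici_subset_Ici.2 h))

theorem basis_mem_tail {n k : ℕ} (h : n ≤ k) : B k ∈ tail B n :=
  Submodule.subset_span ⟨k, h, rfl⟩

theorem mem_tail_zero (x : L) : x ∈ tail B 0 := by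
  rw [tail, ← Nat.bot_eq_zero, Set.Ici_bot, Set.image_univ, B.span_eq]
  exact Submodule.mem_top

theorem apply_mem_of_basis {M : Type*} [AddCommGroup M] [Module K M]
    (f : L →ₗ[K] L →ₗ[K] M) {W : Submodule K M} {p q : ℕ}
    (h : ∀ u v, p ≤ u → q ≤ v → f (B u) (B v) ∈ W) {x y : L}
    (hx : x ∈ tail B p) (hy : y ∈ tail B q) : f x y ∈ W := by
  have hxy := Submodule.apply_mem_map₂ f hx hy
  rw [tail, tail, Submodule.map₂_span_span] at hxy
  refine Submodule.span_le.2 ?_ hxy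
  rintro _ ⟨_, ⟨u, hu, rfl⟩, _, ⟨v, hv, rfl⟩, rfl⟩
  exact h u v hu hv

theorem lie_mem_of_basis {W : Submodule K L} {p q : ℕ}
    (h : ∀ u v, p ≤ u → q ≤ v → ⁅B u, B v⁆ ∈ W) {x y : L}
    (hx : x ∈ tail B p) (hy : y ∈ tail B q) : ⁅x, y⁆ ∈ W :=
  apply_mem_of_basis (LinearMap.mk₂ K (fun x y => ⁅x, y⁆) add_lie smul_lie lie_add lie_smul)
    h hx hy

theorem lie_eq_zero_of_basis {p q : ℕ} (h : ∀ u v, p ≤ u → q ≤ v → ⁅B u, B v⁆ = 0) {x y : L}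
    (hx : x ∈ tail B p) (hy : y ∈ tail B q) : ⁅x, y⁆ = 0 :=
  (Submodule.mem_bot K).1 (lie_mem_of_basis (fun u v hu hv => by simp [h u v hu hv]) hx hy)

variable (ha : ∀ i, 1 ≤ i → ⁅B 0, B i⁆ = B (i + 1))
  (hfil : ∀ i j, 1 ≤ i → 1 ≤ j → ⁅B i, B j⁆ ∈ tail B (i + j + 1))

include ha in
theorem lie_basis_zero_mem_tail {x : L} {n : ℕ} (hn : 1 ≤ n) (hx : x ∈ tail B n) :
    ⁅B 0, x⁆ ∈ tail B (n + 1) := by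
  refine (Submodule.span_le (p := (tail B (n + 1)).comap (ad K L (B 0)))).2 ?_ hx
  rintro _ ⟨k, hk, rfl⟩
  simpa [ha k (hn.trans hk)] using basis_mem_tail (B := B) (Nat.succ_le_succ hk)

include ha in
theorem repr_lie_basis_zero {x : L} (hx : x ∈ tail B 1) (j : ℕ) :
    B.repr ⁅B 0, x⁆ (j + 1) = B.repr x j := by
  refine LinearMap.eqOn_span (R := K)
    (f := Finsupp.lapply (j + 1) ∘ₗ B.repr.toLinearMap ∘ₗ ad K L (B 0))
    (g := Finsupp.lapply j ∘ₗ B.repr.toLinearMap) ?_ hx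
  rintro _ ⟨k, hk, rfl⟩
  simp [ha k hk, Finsupp.single_apply]

include ha in
theorem ad_pow_mem_tail_and_repr_eq {x : L} {n : ℕ} (hn : 1 ≤ n) (hx : x ∈ tail B n) (d : ℕ) :
    (ad K L (B 0) ^ d) x ∈ tail B (n + d) ∧
      B.repr ((ad K L (B 0) ^ d) x) (n + d) = B.repr x n := by
  induction d with
  | zero => simpa using hx
  | succ d ih =>
    rw [pow_succ', Module.End.mul_apply, ad_apply, ← add_assoc]
    exact ⟨lie_basis_zero_mem_tail ha (by omega) ih.1,
      (repr_lie_basis_zero ha (tail_antitone (by omega) ih.1) _).trans ih.2⟩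

include hfil in
theorem exists_exact_gap {w : ℕ} (hw : 1 ≤ w)
    (hne : ∃ u v, w ≤ u ∧ w ≤ v ∧ ⁅B u, B v⁆ ≠ 0) :
    ∃ s, (∀ u v, w ≤ u → w ≤ v → ⁅B u, B v⁆ ∈ tail B (u + v + 1 + s)) ∧
      ∃ u v, w ≤ u ∧ w ≤ v ∧ B.repr ⁅B u, B v⁆ (u + v + 1 + s) ≠ 0 := by
  classical
  have hex : ∃ s u v, w ≤ u ∧ w ≤ v ∧ B.repr ⁅B u, B v⁆ (u + v + 1 + s) ≠ 0 := by
    obtain ⟨u, v, hu, hv, huv⟩ := hne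
    obtain ⟨j, hj⟩ := DFunLike.ne_iff.1 (B.repr.map_ne_zero_iff.2 huv)
    have hj' : u + v + 1 ≤ j := by
      by_contra! hlt
      exact hj (repr_eq_zero_of_mem_tail (hfil u v (by omega) (by omega)) hlt)
    exact ⟨j - (u + v + 1), u, v, hu, hv, by rwa [Nat.add_sub_cancel' hj']⟩
  refine ⟨Nat.find hex, fun u v hu hv => mem_tail_iff.2 fun j hj => ?_, Nat.find_spec hex⟩
  by_contra hne
  rcases lt_or_ge j (u + v + 1) with hlt | hge
  · exact hne (repr_eq_zero_of_mem_tail (hfil u v (by omega) (by omega)) hlt)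
  · exact Nat.find_min hex (m := j - (u + v + 1)) (by omega)
      ⟨u, v, hu, hv, by rwa [Nat.add_sub_cancel' hge]⟩

theorem lie_mem_tail_and_repr_of_gap {w s : ℕ}
    (hs : ∀ u v, w ≤ u → w ≤ v → ⁅B u, B v⁆ ∈ tail B (u + v + 1 + s))
    {p q : ℕ} (hp : w ≤ p) (hq : w ≤ q) {x y : L} (hx : x ∈ tail B p) (hy : y ∈ tail B q) :
    ⁅x, y⁆ ∈ tail B (p + q + 1 + s) ∧ B.repr ⁅x, y⁆ (p + q + 1 + s) =
      B.repr x p * B.repr y q * B.repr ⁅B p, B q⁆ (p + q + 1 + s) := by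
  set N := p + q + 1 + s
  refine ⟨lie_mem_of_basis (fun u v hu hv => tail_antitone (by omega)
    (hs u v (by omega) (by omega))) hx hy, ?_⟩
  let f : L →ₗ[K] L →ₗ[K] K := LinearMap.mk₂ K
    (fun x y => B.repr ⁅x, y⁆ N - B.repr x p * B.repr y q * B.repr ⁅B p, B q⁆ N)
    (by intros; simp only [add_lie, map_add, Finsupp.add_apply]; ring)
    (by intros; simp only [smul_lie, map_smul, Finsupp.smul_apply, smul_eq_mul]; ring)
    (by intros; simp only [lie_add, map_add, Finsupp.add_apply]; ring)
    (by intros; simp only [lie_smul, map_smul, Finsupp.smul_apply, smul_eq_mul]; ring)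
  have hf := apply_mem_of_basis f (W := ⊥) (fun u v hu hv => ?_) hx hy
  · simpa [f, sub_eq_zero] using hf
  rw [Submodule.mem_bot]
  by_cases huv : u = p ∧ v = q
  · obtain ⟨rfl, rfl⟩ := huv
    simp [f]
  · have h1 : B.repr ⁅B u, B v⁆ N = 0 :=
      repr_eq_zero_of_mem_tail (hs u v (by omega) (by omega)) (by omega)
    have h2 : B.repr (B u) p * B.repr (B v) q = 0 := by
      simp only [Module.Basis.repr_self, Finsupp.single_apply]
      split_ifs <;> simp_all
    simp only [f, LinearMap.mk₂_apply, h1, h2, zero_mul, sub_zero]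

include ha hfil in
theorem exists_exact_order_mem_derivedSeries
    (hne : ∀ w, ∃ u v, w ≤ u ∧ w ≤ v ∧ ⁅B u, B v⁆ ≠ 0) (m : ℕ) :
    ∃ n, 1 ≤ n ∧ ∃ X ∈ derivedSeries K L m, X ∈ tail B n ∧ B.repr X n ≠ 0 := by
  induction m with
  | zero => exact ⟨1, le_rfl, B 1, LieSubmodule.mem_top _, basis_mem_tail le_rfl, by simp⟩
  | succ m ih =>
    obtain ⟨n, hn, X, hXD, hXn, hX⟩ := ih
    obtain ⟨s, hs, u, v, hu, hv, huv⟩ := exists_exact_gap hfil hn (hne n)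
    have hshift : ∀ d, (ad K L (B 0) ^ d) X ∈ derivedSeries K L m := fun d => by
      induction d with
      | zero => exact hXD
      | succ d ih => rw [pow_succ', Module.End.mul_apply]; exact LieSubmodule.lie_mem _ ih
    obtain ⟨hXu, hXu'⟩ := ad_pow_mem_tail_and_repr_eq ha hn hXn (u - n)
    obtain ⟨hXv, hXv'⟩ := ad_pow_mem_tail_and_repr_eq ha hn hXn (v - n)
    rw [Nat.add_sub_cancel' hu] at hXu hXu'
    rw [Nat.add_sub_cancel' hv] at hXv hXv'
    obtain ⟨hmem, hrepr⟩ := lie_mem_tail_and_repr_of_gap hs hu hv hXu hXv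
    refine ⟨u + v + 1 + s, by omega, _, ?_, hmem, ?_⟩
    · rw [derivedSeries_def, derivedSeriesOfIdeal_succ, ← derivedSeries_def]
      exact LieSubmodule.lie_mem_lie (hshift _) (hshift _)
    · rw [hrepr, hXu', hXv']
      exact mul_ne_zero (mul_ne_zero hX hX) huv

include ha hfil in
theorem exists_abelian_tail [IsSolvable L] :
    ∃ M, ∀ u v, M ≤ u → M ≤ v → ⁅B u, B v⁆ = 0 := by
  by_contra! hne
  obtain ⟨k, hk⟩ := IsSolvable.solvable K L
  obtain ⟨n, -, X, hXD, -, hX⟩ := exists_exact_order_mem_derivedSeries ha hfil hne k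
  rw [hk, LieSubmodule.mem_bot] at hXD
  simp [hXD] at hX

theorem linearMap_ext_X_pow {M : Type*} [AddCommGroup M] [Module K M] {f g : K[X] →ₗ[K] M}
    (h : ∀ k, f (X ^ k) = g (X ^ k)) : f = g :=
  (basisMonomials K).ext fun k => by simpa [coe_basisMonomials, X_pow_eq_monomial] using h k

variable (B) in
noncomputable def polyEmb (c : ℕ) : K[X] →ₗ[K] L :=
  (basisMonomials K).constr K fun k => B (c + k)

theorem polyEmb_X_pow (c k : ℕ) : polyEmb B c (X ^ k) = B (c + k) := by
  simpa [polyEmb, coe_basisMonomials, X_pow_eq_monomial] using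
    (basisMonomials K).constr_basis K (fun k => B (c + k)) k

theorem repr_polyEmb (c k : ℕ) (p : K[X]) : B.repr (polyEmb B c p) (c + k) = p.coeff k := by
  refine LinearMap.congr_fun (linearMap_ext_X_pow (f := Finsupp.lapply (c + k) ∘ₗ
    B.repr.toLinearMap ∘ₗ polyEmb B c) (g := lcoeff K k) fun j => ?_) p
  simp [polyEmb_X_pow, coeff_X_pow, Finsupp.single_apply, eq_comm]

theorem polyEmb_injective (c : ℕ) : Function.Injective (polyEmb B c) := by
  intro p q h
  ext k
  rw [← repr_polyEmb (B := B) c, ← repr_polyEmb (B := B) c, h]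

theorem range_polyEmb (c : ℕ) : LinearMap.range (polyEmb B c) = tail B c := by
  rw [polyEmb, Module.Basis.constr_range, tail]
  congr 1
  ext x
  simp only [Set.mem_range, Set.mem_image, Set.mem_Ici]
  exact ⟨fun ⟨k, hk⟩ => ⟨c + k, by omega, hk⟩,
    fun ⟨j, hj, hx⟩ => ⟨j - c, by rw [← hx, Nat.add_sub_cancel' hj]⟩⟩

theorem polyEmb_mem_tail (c : ℕ) (p : K[X]) : polyEmb B c p ∈ tail B c :=
  (range_polyEmb c).le (LinearMap.mem_range_self _ p)

include ha in
theorem lie_basis_zero_polyEmb {c : ℕ} (hc : 1 ≤ c) (p : K[X]) :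
    ⁅B 0, polyEmb B c p⁆ = polyEmb B c (X * p) := by
  refine LinearMap.congr_fun (linearMap_ext_X_pow (f := ad K L (B 0) ∘ₗ polyEmb B c)
    (g := polyEmb B c ∘ₗ LinearMap.mulLeft K X) fun k => ?_) p
  simp [polyEmb_X_pow, ha (c + k) (by omega), ← pow_succ', add_assoc]

include ha in
theorem lie_polyEmb {c : ℕ} (hc : 1 ≤ c) {e : L} {τ α : K[X]}
    (hτ : ∀ p, ⁅⁅B 0, e⁆, polyEmb B c p⁆ = polyEmb B c (τ * p))
    (hα : polyEmb B c α = ⁅e, B c⁆) (p : K[X]) :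
    ⁅e, polyEmb B c p⁆ = polyEmb B c (α * p - τ * derivative p) := by
  refine LinearMap.congr_fun (linearMap_ext_X_pow (f := ad K L e ∘ₗ polyEmb B c)
    (g := polyEmb B c ∘ₗ (LinearMap.mulLeft K α - LinearMap.mulLeft K τ ∘ₗ derivative))
    fun k => ?_) p
  simp only [LinearMap.comp_apply, ad_apply, LinearMap.sub_apply, LinearMap.mulLeft_apply]
  induction k with
  | zero => simpa [hα] using congrArg (⁅e, ·⁆) (polyEmb_X_pow (B := B) c 0)
  | succ k ih =>
    rw [pow_succ', ← lie_basis_zero_polyEmb ha hc,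
      eq_sub_of_add_eq' (leibniz_lie (B 0) e _).symm, ih, hτ, lie_basis_zero_polyEmb ha hc,
      ← map_sub]
    congr 1
    rw [derivative_mul, derivative_X]
    ring

theorem eq_zero_of_mul_derivative_eq_zero [CharZero K] {p : K[X]} (h0 : p.coeff 0 = 0)
    (h : p * derivative p = 0) : p = 0 := by
  rcases mul_eq_zero.1 h with hp | hp
  · exact hp
  · rw [eq_C_of_derivative_eq_zero hp, h0, C_0]

include ha hfil in
theorem abelian_tail_of_succ [CharZero K] {n : ℕ} (hn : 1 ≤ n)
    (h : ∀ u v, n + 2 ≤ u → n + 2 ≤ v → ⁅B u, B v⁆ = 0) :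
    ∀ u v, n + 1 ≤ u → n + 1 ≤ v → ⁅B u, B v⁆ = 0 := by
  have hc : 1 ≤ n + 2 := by omega
  obtain ⟨τ, hτ⟩ : ⁅B (n + 1), B (n + 2)⁆ ∈ LinearMap.range (polyEmb B (n + 2)) := by
    rw [range_polyEmb]
    exact tail_antitone (by omega) (hfil _ _ (by omega) (by omega))
  obtain ⟨α, hα⟩ : ⁅B n, B (n + 2)⁆ ∈ LinearMap.range (polyEmb B (n + 2)) := by
    rw [range_polyEmb]
    exact tail_antitone (by omega) (hfil _ _ hn (by omega))
  have hT (p : K[X]) : ⁅B (n + 1), polyEmb B (n + 2) p⁆ = polyEmb B (n + 2) (τ * p) := by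
    refine (lie_polyEmb ha hc (τ := 0) (fun q => ?_) hτ p).trans (by simp)
    rw [ha _ (by omega), zero_mul, map_zero]
    exact lie_eq_zero_of_basis h (basis_mem_tail le_rfl) (polyEmb_mem_tail _ q)
  have hA := lie_polyEmb ha hc (e := B n) (fun p => by rw [ha n hn]; exact hT p) hα
  have hjacobi : ⁅B n, ⁅B (n + 1), B (n + 2)⁆⁆ = ⁅B (n + 1), ⁅B n, B (n + 2)⁆⁆ := by
    rw [leibniz_lie, lie_eq_zero_of_basis h (tail_antitone (by omega) (hfil n (n + 1) hn
      (by omega))) (basis_mem_tail le_rfl), zero_add]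
  rw [← hτ, ← hα, hA, hT] at hjacobi
  have hmul : τ * derivative τ = 0 := by
    linear_combination -(polyEmb_injective (B := B) _ hjacobi)
  have hcoeff : τ.coeff 0 = 0 := by
    rw [← repr_polyEmb (B := B) (n + 2) 0, add_zero, hτ]
    exact repr_eq_zero_of_mem_tail (hfil _ _ (by omega) (by omega)) (by omega)
  have hrow (v : ℕ) (hv : n + 2 ≤ v) : ⁅B (n + 1), B v⁆ = 0 := by
    obtain ⟨k, rfl⟩ := Nat.exists_eq_add_of_le hv
    rw [← polyEmb_X_pow (B := B) (n + 2) k, hT, eq_zero_of_mul_derivative_eq_zero hcoeff hmul,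
      zero_mul, map_zero]
  intro u v hu hv
  rcases hu.eq_or_lt with rfl | hu
  · rcases hv.eq_or_lt with rfl | hv
    · exact lie_self _
    · exact hrow v hv
  · rcases hv.eq_or_lt with rfl | hv
    · rw [← lie_skew, hrow u hu, neg_zero]
    · exact h u v hu hv

include ha hfil in
theorem abelian_tail_two [CharZero K] {M : ℕ} (hM : ∀ u v, M ≤ u → M ≤ v → ⁅B u, B v⁆ = 0) :
    ∀ u v, 2 ≤ u → 2 ≤ v → ⁅B u, B v⁆ = 0 := by
  suffices ∀ d, (∀ u v, d + 2 ≤ u → d + 2 ≤ v → ⁅B u, B v⁆ = 0) →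
      ∀ u v, 2 ≤ u → 2 ≤ v → ⁅B u, B v⁆ = 0 from
    this M fun u v hu hv => hM u v (by omega) (by omega)
  intro d
  induction d with
  | zero => exact fun h => by simpa using h
  | succ d ih => exact fun h => ih (abelian_tail_of_succ ha hfil (n := d + 1) (by omega) h)

include ha hfil in
theorem mem_tail_two_of_mem_derivedSeries_one {x : L} (hx : x ∈ derivedSeries K L 1) :
    x ∈ tail B 2 := by
  rw [derivedSeries_def, derivedSeriesOfIdeal_succ, derivedSeriesOfIdeal_zero,
    ← LieSubmodule.mem_toSubmodule, LieSubmodule.lieIdeal_oper_eq_linear_span'] at hx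
  refine Submodule.span_le.2 ?_ hx
  rintro _ ⟨y, -, z, -, rfl⟩
  refine lie_mem_of_basis (B := B) (p := 0) (q := 0) (fun u v _ _ => ?_)
    (mem_tail_zero y) (mem_tail_zero z)
  rcases u with _ | u <;> rcases v with _ | v
  · simp
  · rw [ha _ (by omega)]
    exact basis_mem_tail (by omega)
  · rw [← lie_skew, ha _ (by omega)]
    exact neg_mem (basis_mem_tail (by omega))
  · exact tail_antitone (by omega) (hfil _ _ (by omega) (by omega))

end Filiform

/-- Let `L` be a solvable infinite filiform Lie algebra over a field of
characteristic zero (basis `B` with `B 0 = a`, `B i = eᵢ`,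
`[a, eᵢ] = e_{i+1}`, `[eᵢ, eⱼ] ∈ span {e_k : k ≥ i+j+1}`).  Then `[L, L]` is
abelian, i.e. `L` is metabelian. -/
theorem filiform_solvable_metabelian (K : Type*) [Field K] [CharZero K]
    (L : Type*) [LieRing L] [LieAlgebra K L] (B : Module.Basis ℕ K L)
    (ha : ∀ i, 1 ≤ i → ⁅B 0, B i⁆ = B (i + 1))
    (hfil : ∀ i, 1 ≤ i → ∀ j, 1 ≤ j →
      ⁅B i, B j⁆ ∈ Submodule.span K {x : L | ∃ t, i + j + 1 ≤ t ∧ x = B t})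
    (hsolv : LieAlgebra.IsSolvable L) :
    ∀ x ∈ LieAlgebra.derivedSeries K L 1, ∀ y ∈ LieAlgebra.derivedSeries K L 1,
      ⁅x, y⁆ = 0 := by
  have hfil' : ∀ i j, 1 ≤ i → 1 ≤ j → ⁅B i, B j⁆ ∈ Filiform.tail B (i + j + 1) := by
    intro i j hi hj
    have hset : {x : L | ∃ t, i + j + 1 ≤ t ∧ x = B t} = B '' Set.Ici (i + j + 1) := by
      ext x
      simp [eq_comm]
    rw [Filiform.tail, ← hset]
    exact hfil i hi j hj
  obtain ⟨M, hM⟩ := Filiform.exists_abelian_tail ha hfil'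
  intro x hx y hy
  exact Filiform.lie_eq_zero_of_basis (Filiform.abelian_tail_two ha hfil' hM)
    (Filiform.mem_tail_two_of_mem_derivedSeries_one ha hfil' hx)
    (Filiform.mem_tail_two_of_mem_derivedSeries_one ha hfil' hy)
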